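/- Let f : ℝ → ℝ be continuously differentiable, let h > 0, and let (θ_k, ψ_k) be any sequence in ℝ² satisfying the simultaneous gradient descent recursion θ_{k+1} = θ_k − h f′(θ_k ψ_k) ψ_k and ψ_{k+1} = ψ_k + h f′(θ_k ψ_k) θ_k. Then for every k, θ_{k+1}² + ψ_{k+1}² = (θ_k² + ψ_k²)(1 + h² f′(θ_k ψ_k)²) ≥ θ_k² + ψ_k²; in particular the sequence of squared norms θ_k² + ψ_k² is monotonically increasing. -/
import Mathlib

/-- For simultaneous gradient descent on the Dirac-GAN, the squared norm of the iterates
satisfies `θ_{k+1}² + ψ_{k+1}² = (θ_k² + ψ_k²)(1 + h² f′(θ_k ψ_k)²) ≥ θ_k² + ψ_k²`;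
in particular the sequence of squared norms is monotonically increasing. -/
theorem dirac_gan_simgd_norm_increasing
    (f : ℝ → ℝ) (hf : ContDiff ℝ 1 f) (h : ℝ) (hh : 0 < h)
    (θ ψ : ℕ → ℝ)
    (hrec : ∀ k : ℕ,
      θ (k + 1) = θ k - h * deriv f (θ k * ψ k) * ψ k ∧
      ψ (k + 1) = ψ k + h * deriv f (θ k * ψ k) * θ k) :
    (∀ k : ℕ,
      θ (k + 1) ^ 2 + ψ (k + 1) ^ 2
        = (θ k ^ 2 + ψ k ^ 2) * (1 + h ^ 2 * deriv f (θ k * ψ k) ^ 2) ∧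
      θ k ^ 2 + ψ k ^ 2 ≤ θ (k + 1) ^ 2 + ψ (k + 1) ^ 2) ∧
    Monotone (fun k => θ k ^ 2 + ψ k ^ 2) := by
  have key : ∀ k : ℕ,
      θ (k + 1) ^ 2 + ψ (k + 1) ^ 2
        = (θ k ^ 2 + ψ k ^ 2) * (1 + h ^ 2 * deriv f (θ k * ψ k) ^ 2) ∧
      θ k ^ 2 + ψ k ^ 2 ≤ θ (k + 1) ^ 2 + ψ (k + 1) ^ 2 := by
    intro k
    obtain ⟨h1, h2⟩ := hrec k
    constructor
    · rw [h1, h2]; ring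
    · rw [h1, h2]
      nlinarith [sq_nonneg (h * deriv f (θ k * ψ k) * θ k),
        sq_nonneg (h * deriv f (θ k * ψ k) * ψ k)]
  exact ⟨key, monotone_nat_of_le_succ fun k => (key k).2⟩
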